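/- Let α > 0 and let v : [0, ∞) → ℝ be continuous on [0, ∞), differentiable on (0, ∞), and such that both v and its derivative v′ are square-integrable on (0, ∞). Then ∫₀^∞ v′(t)² dt − α v(0)² + α² ∫₀^∞ v(t)² dt ≥ 0. -/

import Mathlib

/-!
Complete the square: `0 ≤ ∫₀^∞ (v' + α v)²`. Expanding, the cross term is `α ∫₀^∞ (v²)'`, and
since both `v²` and `(v²)' = 2 v v'` are integrable on `(0, ∞)`, `v²` tends to `0` at infinity,
so this cross term equals `-α v(0)²`.
-/

open MeasureTheory Set

theorem integrable_mul_of_integrable_sq {X : Type*} [MeasurableSpace X] {μ : Measure X}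
    {f g : X → ℝ} (hf : AEStronglyMeasurable f μ) (hg : AEStronglyMeasurable g μ)
    (hf2 : Integrable (fun x => f x ^ 2) μ) (hg2 : Integrable (fun x => g x ^ 2) μ) :
    Integrable (fun x => f x * g x) μ :=
  ((memLp_two_iff_integrable_sq hf).2 hf2).integrable_mul ((memLp_two_iff_integrable_sq hg).2 hg2)

section HalfLine

variable {v : ℝ → ℝ} {a : ℝ}

theorem integrableOn_two_mul_self_mul_deriv (hdiff : DifferentiableOn ℝ v (Ioi a))
    (hv2 : IntegrableOn (fun t => v t ^ 2) (Ioi a))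
    (hv'2 : IntegrableOn (fun t => deriv v t ^ 2) (Ioi a)) :
    IntegrableOn (fun t => 2 * v t * deriv v t) (Ioi a) := by
  have h := (integrable_mul_of_integrable_sq
    (hdiff.continuousOn.aestronglyMeasurable measurableSet_Ioi)
    (measurable_deriv v).aestronglyMeasurable hv2 hv'2).const_mul 2
  simp only [← mul_assoc] at h
  exact h

theorem integral_Ioi_two_mul_self_mul_deriv (hcont : ContinuousWithinAt v (Ici a) a)
    (hdiff : DifferentiableOn ℝ v (Ioi a))
    (hv2 : IntegrableOn (fun t => v t ^ 2) (Ioi a))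
    (hv'2 : IntegrableOn (fun t => deriv v t ^ 2) (Ioi a)) :
    ∫ t in Ioi a, 2 * v t * deriv v t = -v a ^ 2 := by
  have hint := integrableOn_two_mul_self_mul_deriv hdiff hv2 hv'2
  have hder : ∀ t ∈ Ioi a, HasDerivAt (fun t => v t ^ 2) (2 * v t * deriv v t) t := by
    intro t ht
    simpa using ((hdiff t ht).differentiableAt (Ioi_mem_nhds ht)).hasDerivAt.fun_pow 2
  exact (integral_Ioi_of_hasDerivAt_of_tendsto (hcont.pow 2) hder hint
    (tendsto_zero_of_hasDerivAt_of_integrableOn_Ioi hder hint hv2)).trans (zero_sub _)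

end HalfLine

theorem halfline_robin_inequality_general
    (α : ℝ) (v : ℝ → ℝ)
    (hcont : ContinuousOn v (Set.Ici 0))
    (hdiff : DifferentiableOn ℝ v (Set.Ioi 0))
    (hv2 : IntegrableOn (fun t => (v t) ^ 2) (Set.Ioi 0))
    (hv'2 : IntegrableOn (fun t => (deriv v t) ^ 2) (Set.Ioi 0)) :
    0 ≤ (∫ t in Set.Ioi (0 : ℝ), (deriv v t) ^ 2)
        - α * (v 0) ^ 2
        + α ^ 2 * (∫ t in Set.Ioi (0 : ℝ), (v t) ^ 2) := by
  have hint := integrableOn_two_mul_self_mul_deriv hdiff hv2 hv'2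
  calc 0 ≤ ∫ t in Ioi (0 : ℝ), (deriv v t + α * v t) ^ 2 := integral_nonneg fun t => sq_nonneg _
    _ = ∫ t in Ioi (0 : ℝ), (deriv v t ^ 2 + α * (2 * v t * deriv v t) + α ^ 2 * v t ^ 2) := by
        congr 1 with t; ring
    _ = (∫ t in Ioi (0 : ℝ), deriv v t ^ 2) + α * (∫ t in Ioi (0 : ℝ), 2 * v t * deriv v t)
          + α ^ 2 * ∫ t in Ioi (0 : ℝ), v t ^ 2 := by
        rw [integral_add, integral_add, integral_const_mul, integral_const_mul]
        exacts [hv'2, hint.const_mul α, hv'2.add (hint.const_mul α), hv2.const_mul _]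
    _ = _ := by
        rw [integral_Ioi_two_mul_self_mul_deriv (hcont 0 self_mem_Ici) hdiff hv2 hv'2]
        ring

/-- The one-dimensional half-line Robin inequality: if `v` is continuous on
`[0, ∞)`, differentiable on `(0, ∞)`, and `v` and `v'` are square-integrable on `(0, ∞)`, then
`∫₀^∞ v′(t)² dt − α v(0)² + α² ∫₀^∞ v(t)² dt ≥ 0`. -/
theorem halfline_robin_inequality
    (α : ℝ) (hα : 0 < α) (v : ℝ → ℝ)
    (hcont : ContinuousOn v (Set.Ici 0))
    (hdiff : DifferentiableOn ℝ v (Set.Ioi 0))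
    (hv2 : IntegrableOn (fun t => (v t) ^ 2) (Set.Ioi 0))
    (hv'2 : IntegrableOn (fun t => (deriv v t) ^ 2) (Set.Ioi 0)) :
    0 ≤ (∫ t in Set.Ioi (0 : ℝ), (deriv v t) ^ 2)
        - α * (v 0) ^ 2
        + α ^ 2 * (∫ t in Set.Ioi (0 : ℝ), (v t) ^ 2) :=
  halfline_robin_inequality_general α v hcont hdiff hv2 hv'2
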